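/- arXiv:2503.15608 — 2 statements merged into one kernel-verified Lean document; each statement's English description precedes it below -/
import Mathlib

section
/- If v is a vertex of a simplicial complex Δ, then depth(link(Δ, v)) ≥ depth(Δ) − 1. -/
open Finset

/-- A (finite, abstract) simplicial complex: a nonempty collection of finite
sets closed under taking subsets. -/
def IsComplex {α : Type} [DecidableEq α] (Δ : Finset (Finset α)) : Prop :=
  Δ.Nonempty ∧ ∀ A ∈ Δ, ∀ B ⊆ A, B ∈ Δ

/-- The link of a face `S` in `Δ`. -/
def link {α : Type} [DecidableEq α] (Δ : Finset (Finset α)) (S : Finset α) :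
    Finset (Finset α) :=
  Δ.filter fun F => Disjoint F S ∧ F ∪ S ∈ Δ

/-- The deletion of a vertex `v` from `Δ`. -/
def del {α : Type} [DecidableEq α] (Δ : Finset (Finset α)) (v : α) :
    Finset (Finset α) :=
  Δ.filter fun F => v ∉ F

/-- The dimension of a simplicial complex, as an integer (`-1` for `{∅}`). -/
def dimC {α : Type} (Δ : Finset (Finset α)) : ℤ := ((Δ.sup Finset.card : ℕ) : ℤ) - 1

/-- A facet: a maximal face. -/
def IsFacet {α : Type} (Δ : Finset (Finset α)) (A : Finset α) : Prop :=
  A ∈ Δ ∧ ∀ B ∈ Δ, A ⊆ B → B = A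

/-- The simplicial boundary of a basis element: `∂A = ∑_{a ∈ A} (-1)^{pos(a)} (A \ {a})`,
where `pos(a)` is the position of `a` in the increasing ordering of `A`. -/
noncomputable def bdElt {α : Type} [LinearOrder α] (F : Type) [Field F]
    (A : Finset α) : Finset α →₀ F :=
  ∑ a ∈ A, ((-1 : F) ^ (A.filter (· < a)).card) • Finsupp.single (A.erase a) (1 : F)

/-- The boundary operator on (augmented) simplicial chains, where the chain in
cardinality `k` is spanned by the `k`-element sets (in particular the empty set
spans the augmentation degree). -/
noncomputable def bd {α : Type} [LinearOrder α] (F : Type) [Field F] :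
    (Finset α →₀ F) →ₗ[F] (Finset α →₀ F) :=
  Finsupp.lsum F fun A => LinearMap.toSpanSingleton F (Finset α →₀ F) (bdElt F A)

/-- Vanishing of the reduced simplicial homology `H̃_i(Δ; F)`: every reduced
cycle supported on `(i+1)`-element faces of `Δ` is the boundary of a chain
supported on `(i+2)`-element faces of `Δ`. -/
def HomologyVanishes {α : Type} [LinearOrder α] (F : Type) [Field F]
    (Δ : Finset (Finset α)) (i : ℤ) : Prop :=
  ∀ x : Finset α →₀ F, (∀ A ∈ x.support, A ∈ Δ ∧ (A.card : ℤ) = i + 1) →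
    bd F x = 0 →
    ∃ y : Finset α →₀ F, (∀ A ∈ y.support, A ∈ Δ ∧ (A.card : ℤ) = i + 2) ∧
      bd F y = x

/-- `Δ` is Cohen–Macaulay over `F`: for every face `A` and every
`i < dim link(Δ, A)`, the reduced homology `H̃_i(link(Δ,A); F)` vanishes. -/
def IsCM {α : Type} [LinearOrder α] (F : Type) [Field F]
    (Δ : Finset (Finset α)) : Prop :=
  ∀ A ∈ Δ, ∀ i : ℤ, i < dimC (link Δ A) → HomologyVanishes F (link Δ A) i

/-- The `d`-dimensional skeleton of `Δ`: all faces of dimension at most `d`. -/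
def skeleton {α : Type} (Δ : Finset (Finset α)) (d : ℤ) : Finset (Finset α) :=
  Δ.filter fun A => (A.card : ℤ) ≤ d + 1

/-- The depth of `Δ` over `F`: the largest `d` such that the `d`-dimensional
skeleton of `Δ` is Cohen–Macaulay over `F`. -/
noncomputable def depthC {α : Type} [LinearOrder α] (F : Type) [Field F]
    (Δ : Finset (Finset α)) : ℤ :=
  sSup {d : ℤ | d ≤ dimC Δ ∧ IsCM F (skeleton Δ d)}

/-- Vertex-decomposability: `Δ` is a simplex, or has a shedding vertex `v`
(every face containing `v` admits an exchange) whose deletion and link are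
both vertex-decomposable. -/
inductive VertexDecomposable {α : Type} [DecidableEq α] :
    Finset (Finset α) → Prop
  | simplex (A : Finset α) : VertexDecomposable A.powerset
  | shed (Δ : Finset (Finset α)) (v : α)
      (hshed : ∀ A ∈ Δ, v ∈ A → ∃ w, w ≠ v ∧ w ∉ A ∧ insert w (A.erase v) ∈ Δ)
      (hdel : VertexDecomposable (del Δ v))
      (hlink : VertexDecomposable (link Δ {v})) :
      VertexDecomposable Δ

section DepthAux

variable {α : Type} [LinearOrder α] {F : Type} [Field F]

lemma mem_link {Δ : Finset (Finset α)} {S A : Finset α} :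
    A ∈ link Δ S ↔ A ∈ Δ ∧ Disjoint A S ∧ A ∪ S ∈ Δ := by
  simp [link]

lemma empty_mem_of_complex {Δ : Finset (Finset α)} (h : IsComplex Δ) : ∅ ∈ Δ := by
  obtain ⟨⟨A, hA⟩, hcl⟩ := h; exact hcl A hA ∅ (Finset.empty_subset A)

lemma link_isComplex' {Δ : Finset (Finset α)} (h : IsComplex Δ)
    {S : Finset α} (hS : S ∈ Δ) : IsComplex (link Δ S) := by
  constructor
  · exact ⟨∅, by simp [link, empty_mem_of_complex h, hS]⟩
  · intro A hA B hB
    simp only [link, mem_filter] at hA ⊢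
    exact ⟨h.2 A hA.1 B hB, hA.2.1.mono_left hB, h.2 _ hA.2.2 _ (union_subset_union_left hB)⟩

lemma link_link {Γ : Finset (Finset α)} (hΓ : IsComplex Γ) {S A : Finset α}
    (hA : Disjoint A S) : link (link Γ S) A = link Γ (A ∪ S) := by
  ext B
  simp only [mem_link]
  constructor
  · rintro ⟨⟨h1, h2, h3⟩, h4, h5, h6, h7⟩
    exact ⟨h1, disjoint_union_right.mpr ⟨h4, h2⟩, by rwa [← union_assoc]⟩
  · rintro ⟨h1, h2, h3⟩
    rw [disjoint_union_right] at h2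
    refine ⟨⟨h1, h2.2, hΓ.2 _ h3 _ ?_⟩, h2.1, hΓ.2 _ h3 _ ?_, disjoint_union_left.mpr ⟨h2.2, hA⟩,
      by rwa [union_assoc]⟩
    · exact union_subset (subset_union_left) (subset_union_right.trans subset_union_right)
    · exact union_subset (subset_union_left)
        ((subset_union_left).trans subset_union_right)

lemma mem_skeleton {Δ : Finset (Finset α)} {d : ℤ} {A : Finset α} :
    A ∈ skeleton Δ d ↔ A ∈ Δ ∧ (A.card : ℤ) ≤ d + 1 := by simp [skeleton]

lemma skeleton_isComplex {Δ : Finset (Finset α)} (h : IsComplex Δ) {d : ℤ} (hd : -1 ≤ d) :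
    IsComplex (skeleton Δ d) := by
  constructor
  · exact ⟨∅, mem_skeleton.mpr ⟨empty_mem_of_complex h, by simpa using by omega⟩⟩
  · intro A hA B hB
    rw [mem_skeleton] at hA ⊢
    have := card_le_card hB
    exact ⟨h.2 A hA.1 B hB, by have := hA.2; push_cast at *; omega⟩

lemma skeleton_link' (Δ : Finset (Finset α)) (v : α) (d : ℤ) :
    skeleton (link Δ {v}) (d - 1) = link (skeleton Δ d) {v} := by
  ext A
  simp only [mem_skeleton, mem_link]
  constructor
  · rintro ⟨⟨h1, h2, h3⟩, h4⟩
    have hv : v ∉ A := by simpa [disjoint_singleton_right] using h2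
    have hc : (A ∪ {v}).card = A.card + 1 := by
      rw [union_comm, ← insert_eq, card_insert_of_notMem hv]
    exact ⟨⟨h1, by omega⟩, h2, h3, by rw [hc]; push_cast; omega⟩
  · rintro ⟨⟨h1, h2⟩, h3, h4, h5⟩
    have hv : v ∉ A := by simpa [disjoint_singleton_right] using h3
    have hc : (A ∪ {v}).card = A.card + 1 := by
      rw [union_comm, ← insert_eq, card_insert_of_notMem hv]
    rw [hc] at h5
    exact ⟨⟨h1, h3, h4⟩, by push_cast at h5 ⊢; omega⟩

lemma dimC_skeleton {Δ : Finset (Finset α)} (h : IsComplex Δ) {d : ℤ} (h1 : -1 ≤ d)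
    (h2 : d ≤ dimC Δ) : dimC (skeleton Δ d) = d := by
  obtain ⟨n, hn⟩ : ∃ n : ℕ, (n : ℤ) = d + 1 := ⟨(d + 1).toNat, Int.toNat_of_nonneg (by omega)⟩
  have hsup : n ≤ Δ.sup Finset.card := by unfold dimC at h2; omega
  obtain ⟨A, hA, hAc⟩ := Finset.exists_mem_eq_sup Δ h.1 Finset.card
  obtain ⟨B, hBA, hBc⟩ := Finset.exists_subset_card_eq (s := A) (n := n) (by omega)
  have hB : B ∈ skeleton Δ d := mem_skeleton.mpr ⟨h.2 A hA B hBA, by rw [hBc]; omega⟩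
  have hs : (skeleton Δ d).sup Finset.card = n := by
    refine le_antisymm (Finset.sup_le fun C hC => ?_) (by rw [← hBc]; exact le_sup hB)
    have := (mem_skeleton.mp hC).2
    omega
  unfold dimC
  rw [hs]; omega

lemma bd_single (A : Finset α) (c : F) :
    bd F (Finsupp.single A c) = c • bdElt F A := by
  simp [bd, Finsupp.lsum_single, LinearMap.toSpanSingleton_apply]

lemma bdElt_singleton (u : α) : bdElt F {u} = Finsupp.single ∅ 1 := by
  rw [bdElt, sum_singleton, filter_singleton, if_neg (lt_irrefl u), card_empty, pow_zero,
    one_smul, erase_singleton]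

lemma bdElt_pair {a b : α} (hab : a < b) :
    bdElt F {a, b} = Finsupp.single {b} 1 - Finsupp.single {a} 1 := by
  have hne : a ≠ b := ne_of_lt hab
  rw [bdElt, sum_pair hne]
  have h1 : ({a, b} : Finset α).filter (· < a) = ∅ := by
    ext x
    simp only [mem_filter, mem_insert, mem_singleton, notMem_empty, iff_false, not_and]
    rintro (rfl | rfl)
    · exact lt_irrefl _
    · exact fun h => absurd h (not_lt.mpr hab.le)
  have h2 : ({a, b} : Finset α).filter (· < b) = {a} := by
    ext x
    simp only [mem_filter, mem_insert, mem_singleton]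
    constructor
    · rintro ⟨rfl | rfl, h⟩
      · rfl
      · exact absurd h (lt_irrefl _)
    · rintro rfl; exact ⟨Or.inl rfl, hab⟩
  have h3 : ({a, b} : Finset α).erase a = {b} := erase_insert (by simpa using hne)
  have h4 : ({a, b} : Finset α).erase b = {a} := by
    rw [pair_comm]; exact erase_insert (by simpa using hne.symm)
  rw [h1, h2, h3, h4]
  simp [sub_eq_add_neg]

lemma bd_apply (y : Finset α →₀ F) :
    bd F y = ∑ A ∈ y.support, (y A) • bdElt F A := by
  rw [bd, Finsupp.lsum_apply]
  rfl

end DepthAux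

def Adjd {α : Type} [DecidableEq α] (Γ : Finset (Finset α)) (a b : α) : Prop :=
  a ≠ b ∧ ({a, b} : Finset α) ∈ Γ

lemma Adjd.symm {α : Type} [DecidableEq α] {Γ : Finset (Finset α)} {a b : α}
    (h : Adjd Γ a b) : Adjd Γ b a := ⟨h.1.symm, by rw [pair_comm]; exact h.2⟩

section DepthMain
variable {α : Type} [LinearOrder α] {F : Type} [Field F]

lemma reachable_of_H0 {Γ : Finset (Finset α)} (h0 : HomologyVanishes F Γ 0) {u w : α}
    (hu : ({u} : Finset α) ∈ Γ) (hw : ({w} : Finset α) ∈ Γ) :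
    Relation.ReflTransGen (Adjd Γ) u w := by
  classical
  by_cases huw : u = w
  · subst huw; exact Relation.ReflTransGen.refl
  by_contra hreach
  set R : α → Prop := Relation.ReflTransGen (Adjd Γ) u with hR
  set weight : Finset α → F := fun A => if ∃ a ∈ A, R a then 1 else 0 with hweight
  set φ : (Finset α →₀ F) →ₗ[F] F :=
    Finsupp.lsum F fun A => LinearMap.toSpanSingleton F F (weight A) with hφdef
  have hφ : ∀ (A : Finset α) (c : F), φ (Finsupp.single A c) = c * weight A := by
    intro A c
    simp [hφdef, Finsupp.lsum_single, LinearMap.toSpanSingleton_apply, smul_eq_mul]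
  have wsing : ∀ p : α, weight {p} = if R p then 1 else 0 := by
    intro p; simp [hweight]
  set x : Finset α →₀ F := Finsupp.single {u} 1 - Finsupp.single {w} 1 with hx
  have hxsupp : ∀ A ∈ x.support, A ∈ Γ ∧ (A.card : ℤ) = 0 + 1 := by
    intro A hA
    have h1 := Finsupp.support_sub hA
    rw [Finset.mem_union] at h1
    have : A = {u} ∨ A = {w} := by
      rcases h1 with h | h
      · exact Or.inl (Finset.mem_singleton.mp (Finsupp.support_single_subset h))
      · exact Or.inr (Finset.mem_singleton.mp (Finsupp.support_single_subset h))
    rcases this with rfl | rfl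
    · exact ⟨hu, by simp⟩
    · exact ⟨hw, by simp⟩
  have hbdx : bd F x = 0 := by
    simp [hx, bd_single, bdElt_singleton]
  obtain ⟨y, hy, hbdy⟩ := h0 x hxsupp hbdx
  have h1 : φ x = 1 := by
    rw [hx, map_sub, hφ, hφ, one_mul, one_mul, wsing, wsing]
    rw [if_pos (Relation.ReflTransGen.refl), if_neg hreach]
    ring
  have hedge : ∀ p q : α, p < q → ({p, q} : Finset α) ∈ Γ → φ (bdElt F {p, q}) = 0 := by
    intro p q hpq hmem
    rw [bdElt_pair hpq, map_sub, hφ, hφ, one_mul, one_mul, wsing, wsing]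
    have hiff : R p ↔ R q :=
      ⟨fun h => h.tail ⟨ne_of_lt hpq, hmem⟩,
       fun h => h.tail (Adjd.symm ⟨ne_of_lt hpq, hmem⟩)⟩
    rw [if_congr hiff.symm rfl rfl]
    ring
  have h2 : φ (bd F y) = 0 := by
    rw [bd_apply, map_sum]
    refine Finset.sum_eq_zero fun A hA => ?_
    obtain ⟨hAΓ, hAcard⟩ := hy A hA
    have hc2 : A.card = 2 := by exact_mod_cast hAcard
    obtain ⟨a, b, hab, rfl⟩ := card_eq_two.mp hc2
    rw [map_smul]
    rcases lt_or_gt_of_ne hab with h | h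
    · rw [hedge a b h hAΓ, smul_zero]
    · rw [pair_comm] at hAΓ ⊢
      rw [hedge b a h hAΓ, smul_zero]
  rw [hbdy, h1] at h2
  exact one_ne_zero h2

lemma link_empty' (Γ : Finset (Finset α)) : link Γ ∅ = Γ := by
  ext A; simp [mem_link]

lemma link_isCM {Γ : Finset (Finset α)} (h : IsComplex Γ) (hCM : IsCM F Γ)
    {S : Finset α} (hS : S ∈ Γ) : IsCM F (link Γ S) := by
  intro A hA i hi
  rw [mem_link] at hA
  rw [link_link h hA.2.1] at hi ⊢
  exact hCM (A ∪ S) hA.2.2 i hi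

lemma H0_of_CM {Γ : Finset (Finset α)} (h : IsComplex Γ) (hCM : IsCM F Γ)
    (hdim : 2 ≤ Γ.sup Finset.card) : HomologyVanishes F Γ 0 := by
  have h2 := hCM ∅ (empty_mem_of_complex h) 0 (by rw [link_empty']; unfold dimC; omega)
  rwa [link_empty'] at h2

lemma sup_link_vertex_aux :
    ∀ N : ℕ, ∀ Γ : Finset (Finset α), Γ.card ≤ N → IsComplex Γ → IsCM F Γ →
      ∀ v : α, ({v} : Finset α) ∈ Γ →
        Γ.sup Finset.card ≤ (link Γ {v}).sup Finset.card + 1 := by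
  intro N
  induction N with
  | zero =>
    intro Γ hc _ _ v hv
    exact absurd (card_pos.mpr ⟨_, hv⟩) (by omega)
  | succ N IH =>
    intro Γ hc hΓ hCM v hv
    by_cases hn : Γ.sup Finset.card ≤ 1
    · omega
    push_neg at hn
    have h0 : HomologyVanishes F Γ 0 := H0_of_CM hΓ hCM (by omega)
    have hstep : ∀ a b : α, Adjd Γ a b →
        (link Γ {a}).sup Finset.card ≤ (link Γ {b}).sup Finset.card := by
      intro a b hab
      set L := link Γ {a} with hL
      have haΓ : ({a} : Finset α) ∈ Γ := hΓ.2 _ hab.2 _ (by simp)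
      have hbΓ : ({b} : Finset α) ∈ Γ := hΓ.2 _ hab.2 _ (by simp)
      have hLc : IsComplex L := link_isComplex' hΓ haΓ
      have hLCM : IsCM F L := link_isCM hΓ hCM haΓ
      have hdisj : Disjoint ({b} : Finset α) {a} := by
        rw [Finset.disjoint_singleton]; exact hab.1.symm
      have hba : ({b} ∪ {a} : Finset α) ∈ Γ := by
        have he : ({b} ∪ {a} : Finset α) = ({a, b} : Finset α) := by
          ext x; simp; tauto
        rw [he]; exact hab.2
      have hbL : ({b} : Finset α) ∈ L := mem_link.mpr ⟨hbΓ, hdisj, hba⟩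
      have hcard : L.card ≤ N := by
        have hsub : L ⊆ Γ := filter_subset _ _
        have hne : ({a} : Finset α) ∉ L := by
          intro hmem
          rw [mem_link] at hmem
          simp at hmem
        have hlt : L ⊂ Γ := ⟨hsub, fun hsup => hne (hsup haΓ)⟩
        have := card_lt_card hlt
        omega
      have hIH := IH L hcard hLc hLCM b hbL
      have hLL : link L {b} = link Γ ({b} ∪ {a}) := link_link hΓ hdisj
      obtain ⟨E, hE, hEc⟩ := Finset.exists_mem_eq_sup (link Γ ({b} ∪ {a}))
        ⟨∅, mem_link.mpr ⟨empty_mem_of_complex hΓ, by simp, by simpa using hba⟩⟩ Finset.card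
      rw [mem_link] at hE
      have haE : a ∉ E := fun haE => (Finset.disjoint_right.mp hE.2.1 (by simp)) haE
      have hEb : E ∪ {a} ∈ link Γ {b} := by
        rw [mem_link]
        refine ⟨hΓ.2 _ hE.2.2 _ (by intro x; simp; tauto), ?_, ?_⟩
        · rw [disjoint_union_left]
          exact ⟨hE.2.1.mono_right subset_union_left, by rw [Finset.disjoint_singleton]; exact hab.1⟩
        · have he : (E ∪ {a}) ∪ {b} = E ∪ ({b} ∪ {a}) := by ext x; simp; tauto
          rw [he]; exact hE.2.2
      have hcardE : (E ∪ {a}).card = E.card + 1 := by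
        rw [union_comm, ← insert_eq, card_insert_of_notMem haE]
      have hle : E.card + 1 ≤ (link Γ {b}).sup Finset.card := by
        rw [← hcardE]; exact le_sup hEb
      rw [hLL, hEc] at hIH
      omega
    have hsymm : ∀ a b : α, Adjd Γ a b →
        (link Γ {a}).sup Finset.card = (link Γ {b}).sup Finset.card :=
      fun a b hab => le_antisymm (hstep a b hab) (hstep b a hab.symm)
    have htrans : ∀ p q : α, Relation.ReflTransGen (Adjd Γ) p q →
        (link Γ {p}).sup Finset.card = (link Γ {q}).sup Finset.card := by
      intro p q h
      induction h with
      | refl => rfl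
      | tail _ hlast ih => exact ih.trans (hsymm _ _ hlast)
    obtain ⟨A, hA, hAc⟩ := Finset.exists_mem_eq_sup Γ hΓ.1 Finset.card
    have hAne : A.Nonempty := card_pos.mp (by omega)
    obtain ⟨u, hu⟩ := hAne
    have huΓ : ({u} : Finset α) ∈ Γ := hΓ.2 _ hA _ (by simpa using hu)
    have heq := htrans v u (reachable_of_H0 h0 hv huΓ)
    have herase : A.erase u ∈ link Γ {u} := by
      rw [mem_link]
      refine ⟨hΓ.2 _ hA _ (erase_subset _ _), by simp, ?_⟩
      have he : A.erase u ∪ {u} = A := by rw [union_comm, ← insert_eq, insert_erase hu]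
      rw [he]; exact hA
    have hle := le_sup (f := Finset.card) herase
    rw [card_erase_of_mem hu] at hle
    omega

lemma dim_link_vertex {Γ : Finset (Finset α)} (hΓ : IsComplex Γ) (hCM : IsCM F Γ)
    {v : α} (hv : ({v} : Finset α) ∈ Γ) :
    dimC Γ - 1 ≤ dimC (link Γ {v}) := by
  have := sup_link_vertex_aux Γ.card Γ le_rfl hΓ hCM v hv
  unfold dimC
  omega

lemma skeleton_neg_one {Δ : Finset (Finset α)} (h : IsComplex Δ) :
    skeleton Δ (-1) = ({∅} : Finset (Finset α)) := by
  ext A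
  simp only [mem_skeleton, mem_singleton]
  constructor
  · rintro ⟨h1, h2⟩
    have : A.card = 0 := by omega
    exact card_eq_zero.mp this
  · rintro rfl
    exact ⟨empty_mem_of_complex h, by simp⟩

lemma isCM_empty_complex : IsCM F ({∅} : Finset (Finset α)) := by
  intro A hA i hi x hx hbd
  have hA0 : A = ∅ := mem_singleton.mp hA
  subst hA0
  have hlink : link ({∅} : Finset (Finset α)) ∅ = {∅} := link_empty' _
  rw [hlink] at hi
  have hdim : dimC ({∅} : Finset (Finset α)) = -1 := by unfold dimC; simp
  rw [hdim] at hi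
  have hx0 : x = 0 := by
    by_contra hne
    obtain ⟨B, hB⟩ := Finsupp.support_nonempty_iff.mpr hne
    have := (hx B hB).2
    omega
  exact ⟨0, by simp, by rw [map_zero, hx0]⟩

end DepthMain


/-- **Depth drops by at most one under links of vertices.** If `v` is a vertex
of the simplicial complex `Δ`, then `depth(link(Δ,v)) ≥ depth(Δ) - 1`. -/
theorem depth_link_vertex {α : Type} [LinearOrder α]
    (Δ : Finset (Finset α)) (hΔ : IsComplex Δ) (v : α) (hv : {v} ∈ Δ)
    (F : Type) [Field F] :
    depthC F (link Δ {v}) ≥ depthC F Δ - 1 := by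
  classical
  set L := link Δ {v} with hLdef
  have hLc : IsComplex L := link_isComplex' hΔ hv
  have hbddΔ : BddAbove {d : ℤ | d ≤ dimC Δ ∧ IsCM F (skeleton Δ d)} :=
    ⟨dimC Δ, fun d hd => hd.1⟩
  have hbddL : BddAbove {d : ℤ | d ≤ dimC L ∧ IsCM F (skeleton L d)} :=
    ⟨dimC L, fun d hd => hd.1⟩
  have hnegΔ : (-1 : ℤ) ∈ {d : ℤ | d ≤ dimC Δ ∧ IsCM F (skeleton Δ d)} := by
    refine ⟨by unfold dimC; omega, ?_⟩
    rw [skeleton_neg_one hΔ]; exact isCM_empty_complex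
  have hnegL : (-1 : ℤ) ∈ {d : ℤ | d ≤ dimC L ∧ IsCM F (skeleton L d)} := by
    refine ⟨by unfold dimC; omega, ?_⟩
    rw [skeleton_neg_one hLc]; exact isCM_empty_complex
  have hmem : depthC F Δ ∈ {d : ℤ | d ≤ dimC Δ ∧ IsCM F (skeleton Δ d)} :=
    Int.csSup_mem ⟨-1, hnegΔ⟩ hbddΔ
  set d := depthC F Δ with hd
  obtain ⟨hdle, hdCM⟩ := hmem
  rw [ge_iff_le]
  by_cases hd0 : d ≤ 0
  · have h1 : (-1 : ℤ) ≤ depthC F L := le_csSup hbddL hnegL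
    omega
  · push_neg at hd0
    have hd1 : (-1 : ℤ) ≤ d := by omega
    set Γ := skeleton Δ d with hΓdef
    have hΓc : IsComplex Γ := skeleton_isComplex hΔ hd1
    have hvΓ : ({v} : Finset α) ∈ Γ := mem_skeleton.mpr ⟨hv, by rw [card_singleton]; omega⟩
    have hdimΓ : dimC Γ = d := dimC_skeleton hΔ hd1 hdle
    have hsl : skeleton L (d - 1) = link Γ {v} := skeleton_link' Δ v d
    have hCMsl : IsCM F (skeleton L (d - 1)) := by
      rw [hsl]; exact link_isCM hΓc hdCM hvΓ
    have hdim2 : d - 1 ≤ dimC (link Γ {v}) := by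
      have := dim_link_vertex hΓc hdCM hvΓ
      omega
    have hsub : link Γ {v} ⊆ L := by
      rw [← hsl]; exact filter_subset _ _
    have hmono : dimC (link Γ {v}) ≤ dimC L := by
      have := Finset.sup_mono (f := Finset.card) hsub
      unfold dimC
      omega
    have hmemL : d - 1 ∈ {e : ℤ | e ≤ dimC L ∧ IsCM F (skeleton L e)} :=
      ⟨by omega, hCMsl⟩
    unfold depthC
    exact le_csSup hbddL hmemL
end

section
/- The independence complex of a matroid in which no element is a coloop is vertex-decomposable; more precisely, in the independence complex of a matroid, every element that is not a coloop is a shedding vertex, and the independence complex of any matroid is vertex-decomposable. -/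
open Finset

section Aux
variable {α : Type} [DecidableEq α]

lemma exists_facet_above (Δ : Finset (Finset α)) (A : Finset α) (hA : A ∈ Δ) :
    ∃ B, IsFacet Δ B ∧ A ⊆ B := by
  classical
  obtain ⟨M, hM, hmax⟩ := (Δ.filter fun F => A ⊆ F).exists_max_image Finset.card
    ⟨A, by simp [hA]⟩
  rw [mem_filter] at hM
  refine ⟨M, ⟨hM.1, ?_⟩, hM.2⟩
  intro B hB hMB
  have hBmem : B ∈ Δ.filter fun F => A ⊆ F := by
    simp [mem_filter, hB, hM.2.trans hMB]
  exact (Finset.eq_of_subset_of_card_le hMB (hmax B hBmem)).symm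

lemma shed_lemma (Δ : Finset (Finset α)) (hΔ : IsComplex Δ)
    (hexch : ∀ A ∈ Δ, ∀ B ∈ Δ, A.card < B.card →
      ∃ x ∈ B, x ∉ A ∧ insert x A ∈ Δ)
    (v : α) (B : Finset α) (hB : IsFacet Δ B) (hvB : v ∉ B)
    (A : Finset α) (hA : A ∈ Δ) (hvA : v ∈ A) :
    ∃ w, w ≠ v ∧ w ∉ A ∧ insert w (A.erase v) ∈ Δ := by
  have hAB : A.card ≤ B.card := by
    by_contra h
    push_neg at h
    obtain ⟨x, hxA, hxB, hx⟩ := hexch B hB.1 A hA h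
    have := hB.2 (insert x B) hx (subset_insert _ _)
    exact hxB (this ▸ mem_insert_self x B)
  have hcE := card_erase_of_mem hvA
  have hApos : 0 < A.card := card_pos.2 ⟨v, hvA⟩
  have hcard : (A.erase v).card < B.card := by omega
  have hC : A.erase v ∈ Δ := hΔ.2 A hA _ (erase_subset _ _)
  obtain ⟨x, hxB, hxC, hx⟩ := hexch _ hC B hB.1 hcard
  have hxv : x ≠ v := fun h => hvB (h ▸ hxB)
  exact ⟨x, hxv, fun h => hxC (mem_erase.2 ⟨hxv, h⟩), hx⟩

lemma empty_mem (Δ : Finset (Finset α)) (hΔ : IsComplex Δ) : (∅ : Finset α) ∈ Δ := by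
  obtain ⟨A, hA⟩ := hΔ.1
  exact hΔ.2 A hA ∅ (empty_subset _)

lemma vd_aux : ∀ n (Δ : Finset (Finset α)), Δ.card ≤ n → IsComplex Δ →
    (∀ A ∈ Δ, ∀ B ∈ Δ, A.card < B.card → ∃ x ∈ B, x ∉ A ∧ insert x A ∈ Δ) →
    VertexDecomposable Δ := by
  intro n
  induction n with
  | zero =>
    intro Δ h hΔ _
    exfalso
    rw [Nat.le_zero, card_eq_zero] at h
    exact (h ▸ hΔ.1).ne_empty rfl
  | succ n ih =>
    intro Δ hcard hΔ hexch
    by_cases hcase : ∃ v, {v} ∈ Δ ∧ ∃ B, IsFacet Δ B ∧ v ∉ B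
    · obtain ⟨v, hv, B, hB, hvB⟩ := hcase
      refine VertexDecomposable.shed Δ v
        (fun A hA hvA => shed_lemma Δ hΔ hexch v B hB hvB A hA hvA) ?_ ?_
      · -- deletion
        apply ih
        · have hsub : del Δ v ⊆ Δ := filter_subset _ _
          have hvnd : {v} ∉ del Δ v := by simp [del]
          have : (del Δ v).card < Δ.card :=
            card_lt_card ⟨hsub, fun h => hvnd (h hv)⟩
          omega
        · refine ⟨⟨∅, ?_⟩, ?_⟩
          · simp [del, empty_mem Δ hΔ]
          · intro A hA C hCA
            rw [del, mem_filter] at hA ⊢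
            exact ⟨hΔ.2 A hA.1 C hCA, fun h => hA.2 (hCA h)⟩
        · intro A hA C hC h
          rw [del, mem_filter] at hA hC
          obtain ⟨x, hxC, hxA, hx⟩ := hexch A hA.1 C hC.1 h
          refine ⟨x, hxC, hxA, ?_⟩
          rw [del, mem_filter]
          refine ⟨hx, ?_⟩
          simp only [mem_insert, not_or]
          exact ⟨fun h => hC.2 (h ▸ hxC), hA.2⟩
      · -- link
        apply ih
        · have hsub : link Δ {v} ⊆ Δ := filter_subset _ _
          have hvnl : {v} ∉ link Δ {v} := by
            simp [link, disjoint_singleton_right]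
          have : (link Δ {v}).card < Δ.card :=
            card_lt_card ⟨hsub, fun h => hvnl (h hv)⟩
          omega
        · refine ⟨⟨∅, ?_⟩, ?_⟩
          · simp [link, empty_mem Δ hΔ, hv]
          · intro A hA C hCA
            rw [link, mem_filter] at hA ⊢
            refine ⟨hΔ.2 A hA.1 C hCA, disjoint_left.2 fun a ha hav =>
              (disjoint_left.1 hA.2.1) (hCA ha) hav, ?_⟩
            exact hΔ.2 _ hA.2.2 _ (union_subset_union hCA (Subset.refl _))
        · intro A hA C hC h
          rw [link, mem_filter] at hA hC
          have hvA : v ∉ A := by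
            have := hA.2.1; rw [disjoint_singleton_right] at this; exact this
          have hvC : v ∉ C := by
            have := hC.2.1; rw [disjoint_singleton_right] at this; exact this
          have hcA : (A ∪ {v}).card = A.card + 1 := by
            rw [card_union_of_disjoint (by simpa [disjoint_singleton_right] using hvA)]
            simp
          have hcC : (C ∪ {v}).card = C.card + 1 := by
            rw [card_union_of_disjoint (by simpa [disjoint_singleton_right] using hvC)]
            simp
          obtain ⟨x, hxC, hxA, hx⟩ := hexch (A ∪ {v}) hA.2.2 (C ∪ {v}) hC.2.2
            (by omega)
          have hxv : x ≠ v := fun h => hxA (by simp [h])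
          have hxC' : x ∈ C := by
            rcases mem_union.1 hxC with h | h
            · exact h
            · exact absurd (mem_singleton.1 h) hxv
          have hxA' : x ∉ A := fun h => hxA (mem_union_left _ h)
          refine ⟨x, hxC', hxA', ?_⟩
          rw [link, mem_filter]
          have hins : insert x A ∪ {v} = insert x (A ∪ {v}) := insert_union x A {v}
          refine ⟨?_, ?_, by rw [hins]; exact hx⟩
          · exact hΔ.2 _ (hins ▸ hx) _ (subset_union_left)
          · rw [disjoint_singleton_right, mem_insert]
            push_neg
            exact ⟨Ne.symm hxv, hvA⟩
    · -- simplex case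
      push_neg at hcase
      obtain ⟨B, hB, -⟩ := exists_facet_above Δ ∅ (empty_mem Δ hΔ)
      have hΔeq : Δ = B.powerset := by
        ext A
        rw [mem_powerset]
        constructor
        · intro hA a ha
          have hav : {a} ∈ Δ := hΔ.2 A hA {a} (singleton_subset_iff.2 ha)
          exact hcase a hav B hB
        · intro hAB
          exact hΔ.2 B hB.1 A hAB
      rw [hΔeq]
      exact VertexDecomposable.simplex B

end Aux


/-- **Matroid independence complexes are vertex-decomposable.** Let `Δ` be the
family of independent sets of a matroid, i.e. a simplicial complex satisfying
the exchange property. Then every element that is not a coloop (i.e. that is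
omitted by some basis/facet) is a shedding vertex, and `Δ` is
vertex-decomposable. -/
theorem matroid_vertexDecomposable {α : Type} [DecidableEq α]
    (Δ : Finset (Finset α)) (hΔ : IsComplex Δ)
    (hexch : ∀ A ∈ Δ, ∀ B ∈ Δ, A.card < B.card →
      ∃ x ∈ B, x ∉ A ∧ insert x A ∈ Δ) :
    (∀ v : α, {v} ∈ Δ → (∃ B, IsFacet Δ B ∧ v ∉ B) →
      ∀ A ∈ Δ, v ∈ A → ∃ w, w ≠ v ∧ w ∉ A ∧ insert w (A.erase v) ∈ Δ) ∧
    VertexDecomposable Δ := by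
  refine ⟨fun v hv ⟨B, hB, hvB⟩ A hA hvA =>
    shed_lemma Δ hΔ hexch v B hB hvB A hA hvA, ?_⟩
  exact vd_aux Δ.card Δ le_rfl hΔ hexch
end
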